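/- Let A and B be complete perfect distributive InFL-algebras and h : A → B a complete homomorphism. Define h₊ : J∞(B) → J∞(A) by h₊(b) = ⋀ h⁻¹[↑b]. Then: (i) h₊ is a DInFL-frame morphism from the dual frame B₊ to the dual frame A₊; (ii) if h is injective then h₊ is surjective; (iii) if h is surjective then h₊ is an order-embedding. -/

import Mathlib

/-- An involutive FL-algebra (InFL-algebra) structure on a lattice:
a monoid operation with residuation law (Res) expressed via the two
linear negations `lneg` (∼) and `rneg` (−), which are inverse involutions. -/
structure InFL (A : Type*) [Lattice A] where
  mul : A → A → A
  one : A
  mul_assoc : ∀ a b c : A, mul (mul a b) c = mul a (mul b c)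
  one_mul : ∀ a : A, mul one a = a
  mul_one : ∀ a : A, mul a one = a
  lneg : A → A
  rneg : A → A
  res_left : ∀ a b c : A, mul a b ≤ c ↔ a ≤ rneg (mul b (lneg c))
  res_right : ∀ a b c : A, mul a b ≤ c ↔ b ≤ lneg (mul (rneg c) a)
  rneg_lneg : ∀ a : A, rneg (lneg a) = a
  lneg_rneg : ∀ a : A, lneg (rneg a) = a

/-- The sum operation `a + b := −(∼b · ∼a)` of an InFL-algebra. -/
def InFL.sum {A : Type*} [Lattice A] (S : InFL A) (a b : A) : A :=
  S.rneg (S.mul (S.lneg b) (S.lneg a))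

/-- A quasi relation algebra: a De Morgan InFL-algebra satisfying (Dp):
`¬(a·b) = ¬a + ¬b`. -/
structure QRA (A : Type*) [Lattice A] extends InFL A where
  neg : A → A
  neg_neg : ∀ a : A, neg (neg a) = a
  dm : ∀ a b : A, neg (a ⊓ b) = neg a ⊔ neg b
  dp : ∀ a b : A, neg (mul a b) = rneg (mul (lneg (neg b)) (lneg (neg a)))

/-- Completely join-irreducible element of a complete lattice. -/
def CJI {A : Type*} [CompleteLattice A] (j : A) : Prop :=
  ∀ S : Set A, j = sSup S → j ∈ S

/-- Completely meet-irreducible element of a complete lattice. -/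
def CMI {A : Type*} [CompleteLattice A] (m : A) : Prop :=
  ∀ S : Set A, m = sInf S → m ∈ S

/-- A complete lattice is perfect if the completely join-irreducibles are join-dense
and the completely meet-irreducibles are meet-dense. -/
def PerfectLattice (A : Type*) [CompleteLattice A] : Prop :=
  ∀ a : A, a = sSup {j | CJI j ∧ j ≤ a} ∧ a = sInf {m | CMI m ∧ a ≤ m}

/-- The map `κ(j) = ⋁ {a : j ≰ a}`. -/
def kappa {A : Type*} [CompleteLattice A] (j : A) : A :=
  sSup {a | ¬ j ≤ a}

/-- A complete homomorphism between complete (perfect distributive)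
InFL-algebras: it preserves arbitrary joins and meets as well as
`·`, `1`, `∼` and `−`. -/
def IsCompleteInFLHom {A B : Type*} [CompleteLattice A] [CompleteLattice B]
    (SA : InFL A) (SB : InFL B) (h : A → B) : Prop :=
  (∀ S : Set A, h (sSup S) = sSup (h '' S)) ∧
  (∀ S : Set A, h (sInf S) = sInf (h '' S)) ∧
  (∀ a b : A, h (SA.mul a b) = SB.mul (h a) (h b)) ∧
  h SA.one = SB.one ∧
  (∀ a : A, h (SA.lneg a) = SB.lneg (h a)) ∧
  (∀ a : A, h (SA.rneg a) = SB.rneg (h a))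

/-!
`h₊` is the lower adjoint of `h`, which exists because `h` preserves arbitrary meets; so
`h₊ b ≤ a ↔ b ≤ h a`, and every frame condition on `h₊` is the transpose of the corresponding
preservation property of `h`. The conditions involving join-irreducibles rest on one lattice
fact: in a distributive lattice whose completely meet-irreducibles are meet-dense, a completely
join-irreducible `j` is completely join-prime, hence `a ≤ κ(j) ↔ j ≰ a`. If `h` is injective
then `h₊ ∘ h = id`, and if `h` is surjective then `h ∘ h₊ = id`.
-/

section CompleteLattice

variable {A : Type*} [CompleteLattice A]

theorem PerfectLattice.eq_sSup (hperf : PerfectLattice A) (a : A) :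
    a = sSup {j | CJI j ∧ j ≤ a} :=
  (hperf a).1

theorem PerfectLattice.eq_sInf (hperf : PerfectLattice A) (a : A) :
    a = sInf {m | CMI m ∧ a ≤ m} :=
  (hperf a).2

theorem CMI.le_or_le_of_inf_le (hdist : ∀ a b c : A, a ⊓ (b ⊔ c) = (a ⊓ b) ⊔ (a ⊓ c))
    {m a b : A} (hm : CMI m) (hab : a ⊓ b ≤ m) : a ≤ m ∨ b ≤ m := by
  let _ : DistribLattice A := DistribLattice.ofInfSupLe fun a b c => (hdist a b c).le
  have hm_eq : m = sInf {m ⊔ a, m ⊔ b} := by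
    rw [sInf_pair, ← sup_inf_left, sup_eq_left.mpr hab]
  rcases hm _ hm_eq with h | h
  · exact Or.inl (le_sup_right.trans h.ge)
  · exact Or.inr (le_sup_right.trans (Set.mem_singleton_iff.mp h).ge)

theorem exists_cmi_of_not_le (hmeet : ∀ a : A, a = sInf {m | CMI m ∧ a ≤ m}) {a b : A}
    (hab : ¬ a ≤ b) : ∃ m, CMI m ∧ b ≤ m ∧ ¬ a ≤ m := by
  by_contra! hall
  exact hab ((hmeet b).symm ▸ le_sInf fun m hm => hall m hm.1 hm.2)

theorem CJI.sSup_Iio_lt {j : A} (hj : CJI j) : sSup (Set.Iio j) < j :=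
  (sSup_le fun _ => le_of_lt).lt_of_ne fun h => lt_irrefl j (hj (Set.Iio j) h.symm)

/-- A meet-irreducible `m` above `⋁ {a | a < j}` but not above `j` lies above every `t` with
`j ≰ t`, because `j ⊓ t < j`. -/
theorem CJI.exists_le_of_le_sSup (hdist : ∀ a b c : A, a ⊓ (b ⊔ c) = (a ⊓ b) ⊔ (a ⊓ c))
    (hmeet : ∀ a : A, a = sInf {m | CMI m ∧ a ≤ m}) {j : A} (hj : CJI j) {T : Set A}
    (hle : j ≤ sSup T) : ∃ t ∈ T, j ≤ t := by
  by_contra! hT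
  obtain ⟨m, hm, hIio, hjm⟩ := exists_cmi_of_not_le hmeet hj.sSup_Iio_lt.not_ge
  refine hjm (hle.trans (sSup_le fun t ht => ?_))
  have hjt : j ⊓ t < j := inf_le_left.lt_of_ne fun e => hT t ht (inf_eq_left.mp e)
  exact (hm.le_or_le_of_inf_le hdist ((le_sSup (Set.mem_Iio.mpr hjt)).trans hIio)).resolve_left hjm

theorem le_kappa_iff (hdist : ∀ a b c : A, a ⊓ (b ⊔ c) = (a ⊓ b) ⊔ (a ⊓ c))
    (hmeet : ∀ a : A, a = sInf {m | CMI m ∧ a ≤ m}) {j : A} (hj : CJI j) {a : A} :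
    a ≤ kappa j ↔ ¬ j ≤ a := by
  refine ⟨fun ha hja => ?_, fun ha => le_sSup ha⟩
  obtain ⟨x, hx, hjx⟩ := hj.exists_le_of_le_sSup hdist hmeet (hja.trans ha)
  exact hx hjx

end CompleteLattice

namespace InFL

section Lattice

variable {A : Type*} [Lattice A] (S : InFL A)

theorem gc_mul_left (b : A) :
    GaloisConnection (S.mul · b) (fun c => S.rneg (S.mul b (S.lneg c))) :=
  fun a c => S.res_left a b c

theorem gc_mul_right (a : A) :
    GaloisConnection (S.mul a) (fun c => S.lneg (S.mul (S.rneg c) a)) :=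
  fun b c => S.res_right a b c

theorem mul_le_mul {a a' b b' : A} (ha : a ≤ a') (hb : b ≤ b') : S.mul a b ≤ S.mul a' b' :=
  ((S.gc_mul_left b).monotone_l ha).trans ((S.gc_mul_right a').monotone_l hb)

theorem le_lneg_iff (a b : A) : b ≤ S.lneg a ↔ S.mul a b ≤ S.lneg S.one := by
  rw [S.res_right, S.rneg_lneg, S.one_mul]

theorem le_rneg_iff (a b : A) : a ≤ S.rneg b ↔ S.mul a b ≤ S.rneg S.one := by
  rw [S.res_left, S.lneg_rneg, S.mul_one]

theorem lneg_antitone : Antitone S.lneg := fun a a' h =>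
  (S.le_lneg_iff a _).2 ((S.mul_le_mul h le_rfl).trans ((S.le_lneg_iff a' _).1 le_rfl))

theorem rneg_antitone : Antitone S.rneg := fun b b' h =>
  (S.le_rneg_iff _ b).2 ((S.mul_le_mul le_rfl h).trans ((S.le_rneg_iff _ b').1 le_rfl))

theorem lneg_le_iff (a b : A) : S.lneg a ≤ b ↔ S.rneg b ≤ a := by
  refine ⟨fun h => ?_, fun h => ?_⟩
  · simpa only [S.rneg_lneg] using S.rneg_antitone h
  · simpa only [S.lneg_rneg] using S.lneg_antitone h

theorem rneg_le_iff (a b : A) : S.rneg a ≤ b ↔ S.lneg b ≤ a :=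
  (S.lneg_le_iff b a).symm

end Lattice

theorem exists_cji_le_of_le_mul {B : Type*} [CompleteLattice B] (S : InFL B)
    (hdist : ∀ a b c : B, a ⊓ (b ⊔ c) = (a ⊓ b) ⊔ (a ⊓ c)) (hperf : PerfectLattice B)
    {c x y : B} (hc : CJI c) (hle : c ≤ S.mul x y) :
    ∃ b₁ b₂, CJI b₁ ∧ CJI b₂ ∧ b₁ ≤ x ∧ b₂ ≤ y ∧ c ≤ S.mul b₁ b₂ := by
  rw [hperf.eq_sSup x, (S.gc_mul_left y).l_sSup, ← sSup_image] at hle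
  obtain ⟨_, ⟨b₁, hb₁, rfl⟩, hc₁⟩ := hc.exists_le_of_le_sSup hdist hperf.eq_sInf hle
  beta_reduce at hc₁
  rw [hperf.eq_sSup y, (S.gc_mul_right b₁).l_sSup, ← sSup_image] at hc₁
  obtain ⟨_, ⟨b₂, hb₂, rfl⟩, hc₂⟩ := hc.exists_le_of_le_sSup hdist hperf.eq_sInf hc₁
  exact ⟨b₁, b₂, hb₁.1, hb₂.1, hb₁.2, hb₂.2, hc₂⟩

end InFL

section DualMap

variable {A B : Type*} [CompleteLattice A] [CompleteLattice B] {h : A → B}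

/-- The map `h₊` of the paper. -/
def dualMap (h : A → B) (b : B) : A :=
  sInf {a | b ≤ h a}

theorem gc_dualMap (hinf : ∀ S : Set A, h (sInf S) = sInf (h '' S)) :
    GaloisConnection (dualMap h) h := by
  have hmono : Monotone h := fun x y hxy => by
    have hpair := hinf {x, y}
    rw [sInf_pair, inf_eq_left.mpr hxy, Set.image_pair, sInf_pair] at hpair
    rw [hpair]
    exact inf_le_right
  have hunit (b : B) : b ≤ h (dualMap h b) := by
    rw [dualMap, hinf]
    exact le_sInf (Set.forall_mem_image.mpr fun _ hx => hx)
  exact fun b a => ⟨fun hba => (hunit b).trans (hmono hba), fun hb => sInf_le hb⟩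

theorem cji_dualMap (hsup : ∀ S : Set A, h (sSup S) = sSup (h '' S))
    (hinf : ∀ S : Set A, h (sInf S) = sInf (h '' S))
    (hdist : ∀ a b c : B, a ⊓ (b ⊔ c) = (a ⊓ b) ⊔ (a ⊓ c))
    (hmeet : ∀ b : B, b = sInf {m | CMI m ∧ b ≤ m}) {b : B} (hb : CJI b) :
    CJI (dualMap h b) := by
  have gc := gc_dualMap hinf
  intro S hS
  have hle : b ≤ sSup (h '' S) := hsup S ▸ hS ▸ gc.le_u_l b
  obtain ⟨_, ⟨s, hs, rfl⟩, hbs⟩ := hb.exists_le_of_le_sSup hdist hmeet hle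
  have hbs_eq : dualMap h b = s := le_antisymm (gc.l_le hbs) (hS ▸ le_sSup hs)
  exact hbs_eq ▸ hs

theorem dualMap_le_mul {SA : InFL A} {SB : InFL B}
    (hinf : ∀ S : Set A, h (sInf S) = sInf (h '' S))
    (hmul : ∀ a b : A, h (SA.mul a b) = SB.mul (h a) (h b)) {b₁ b₂ b₃ : B}
    (hle : b₁ ≤ SB.mul b₂ b₃) : dualMap h b₁ ≤ SA.mul (dualMap h b₂) (dualMap h b₃) := by
  have gc := gc_dualMap hinf
  refine gc.l_le (hle.trans ?_)
  rw [hmul]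
  exact SB.mul_le_mul (gc.le_u_l b₂) (gc.le_u_l b₃)

theorem exists_cji_dualMap_le_of_le_mul {SA : InFL A} {SB : InFL B}
    (hinf : ∀ S : Set A, h (sInf S) = sInf (h '' S))
    (hmul : ∀ a b : A, h (SA.mul a b) = SB.mul (h a) (h b))
    (hdist : ∀ a b c : B, a ⊓ (b ⊔ c) = (a ⊓ b) ⊔ (a ⊓ c)) (hperf : PerfectLattice B)
    {c : B} {a₁ a₂ : A} (hc : CJI c) (hle : dualMap h c ≤ SA.mul a₁ a₂) :
    ∃ b₁ b₂, CJI b₁ ∧ CJI b₂ ∧ dualMap h b₁ ≤ a₁ ∧ dualMap h b₂ ≤ a₂ ∧ c ≤ SB.mul b₁ b₂ := by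
  have gc := gc_dualMap hinf
  have hc_le : c ≤ SB.mul (h a₁) (h a₂) := hmul a₁ a₂ ▸ gc.le_u hle
  obtain ⟨b₁, b₂, hb₁, hb₂, h₁, h₂, hc₁₂⟩ := SB.exists_cji_le_of_le_mul hdist hperf hc hc_le
  exact ⟨b₁, b₂, hb₁, hb₂, gc.l_le h₁, gc.l_le h₂, hc₁₂⟩

theorem dualMap_lneg_kappa {SA : InFL A} {SB : InFL B}
    (hinf : ∀ S : Set A, h (sInf S) = sInf (h '' S))
    (hrneg : ∀ a : A, h (SA.rneg a) = SB.rneg (h a))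
    (hdistA : ∀ a b c : A, a ⊓ (b ⊔ c) = (a ⊓ b) ⊔ (a ⊓ c))
    (hmeetA : ∀ a : A, a = sInf {m | CMI m ∧ a ≤ m})
    (hdistB : ∀ a b c : B, a ⊓ (b ⊔ c) = (a ⊓ b) ⊔ (a ⊓ c))
    (hmeetB : ∀ b : B, b = sInf {m | CMI m ∧ b ≤ m}) {b : B} (hb : CJI b)
    (hb_dual : CJI (dualMap h b)) :
    dualMap h (SB.lneg (kappa b)) = SA.lneg (kappa (dualMap h b)) := by
  have gc := gc_dualMap hinf
  refine eq_of_forall_ge_iff fun a => ?_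
  rw [gc.le_iff_le, SB.lneg_le_iff, le_kappa_iff hdistB hmeetB hb, ← hrneg, ← gc.le_iff_le,
    SA.lneg_le_iff, le_kappa_iff hdistA hmeetA hb_dual]

theorem dualMap_rneg_kappa {SA : InFL A} {SB : InFL B}
    (hinf : ∀ S : Set A, h (sInf S) = sInf (h '' S))
    (hlneg : ∀ a : A, h (SA.lneg a) = SB.lneg (h a))
    (hdistA : ∀ a b c : A, a ⊓ (b ⊔ c) = (a ⊓ b) ⊔ (a ⊓ c))
    (hmeetA : ∀ a : A, a = sInf {m | CMI m ∧ a ≤ m})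
    (hdistB : ∀ a b c : B, a ⊓ (b ⊔ c) = (a ⊓ b) ⊔ (a ⊓ c))
    (hmeetB : ∀ b : B, b = sInf {m | CMI m ∧ b ≤ m}) {b : B} (hb : CJI b)
    (hb_dual : CJI (dualMap h b)) :
    dualMap h (SB.rneg (kappa b)) = SA.rneg (kappa (dualMap h b)) := by
  have gc := gc_dualMap hinf
  refine eq_of_forall_ge_iff fun a => ?_
  rw [gc.le_iff_le, SB.rneg_le_iff, le_kappa_iff hdistB hmeetB hb, ← hlneg, ← gc.le_iff_le,
    SA.rneg_le_iff, le_kappa_iff hdistA hmeetA hb_dual]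

theorem dualMap_le_one_iff {SA : InFL A} {SB : InFL B}
    (hinf : ∀ S : Set A, h (sInf S) = sInf (h '' S)) (hone : h SA.one = SB.one) {b : B} :
    dualMap h b ≤ SA.one ↔ b ≤ SB.one := by
  rw [(gc_dualMap hinf).le_iff_le, hone]

theorem exists_cji_dualMap_eq (hinf : ∀ S : Set A, h (sInf S) = sInf (h '' S))
    (hjoin : ∀ b : B, b = sSup {j | CJI j ∧ j ≤ b}) (hinj : Function.Injective h) {a : A}
    (ha : CJI a) : ∃ b, CJI b ∧ dualMap h b = a := by
  have gc := gc_dualMap hinf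
  have ha_eq : a = sSup (dualMap h '' {b | CJI b ∧ b ≤ h a}) := by
    rw [sSup_image, ← gc.l_sSup, ← hjoin (h a), hinj (gc.u_l_u_eq_u a)]
  obtain ⟨b, hb, hba⟩ := ha _ ha_eq
  exact ⟨b, hb.1, hba⟩

theorem dualMap_le_dualMap_iff (hinf : ∀ S : Set A, h (sInf S) = sInf (h '' S))
    (hsurj : Function.Surjective h) {b b' : B} : dualMap h b' ≤ dualMap h b ↔ b' ≤ b := by
  have gc := gc_dualMap hinf
  have hcounit (b : B) : h (dualMap h b) = b := by
    obtain ⟨a, rfl⟩ := hsurj b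
    exact gc.u_l_u_eq_u a
  refine ⟨fun hle => ?_, fun hle => gc.monotone_l hle⟩
  simpa only [hcounit] using gc.monotone_u hle

end DualMap

/-- The dual `h₊(b) = ⋀ h⁻¹[↑b]` of a complete homomorphism `h : A → B` between
complete perfect distributive InFL-algebras is a DInFL-frame morphism from the
dual frame `B₊` to the dual frame `A₊` (the frame conditions are spelled out in
terms of the algebras, where on `J∞` one has `x ≼ y ⟺ y ≤ x`,
`z ∈ x∘y ⟺ z ≤ x·y`, `x^∼ = ∼κ(x)`, `x^− = −κ(x)` and `I₁ = {i : i ≤ 1}`);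
moreover `h₊` is surjective if `h` is injective, and an order-embedding if `h`
is surjective. -/
theorem complete_hom_dual_frame_morphism {A B : Type*}
    [CompleteLattice A] [CompleteLattice B]
    (SA : InFL A) (SB : InFL B)
    (hperfA : PerfectLattice A) (hperfB : PerfectLattice B)
    (hdistA : ∀ a b c : A, a ⊓ (b ⊔ c) = (a ⊓ b) ⊔ (a ⊓ c))
    (hdistB : ∀ a b c : B, a ⊓ (b ⊔ c) = (a ⊓ b) ⊔ (a ⊓ c))
    (h : A → B) (hh : IsCompleteInFLHom SA SB h) :
    ((∀ b : B, CJI b → CJI (sInf {a : A | b ≤ h a})) ∧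
     (∀ b b' : B, CJI b → CJI b' → b' ≤ b →
       sInf {a : A | b' ≤ h a} ≤ sInf {a : A | b ≤ h a}) ∧
     (∀ b₁ b₂ b₃ : B, CJI b₁ → CJI b₂ → CJI b₃ → b₁ ≤ SB.mul b₂ b₃ →
       sInf {a : A | b₁ ≤ h a} ≤ SA.mul (sInf {a : A | b₂ ≤ h a}) (sInf {a : A | b₃ ≤ h a})) ∧
     (∀ (c : B) (a₁ a₂ : A), CJI c → CJI a₁ → CJI a₂ →
       sInf {a : A | c ≤ h a} ≤ SA.mul a₁ a₂ →
       ∃ b₁ b₂ : B, CJI b₁ ∧ CJI b₂ ∧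
         sInf {a : A | b₁ ≤ h a} ≤ a₁ ∧ sInf {a : A | b₂ ≤ h a} ≤ a₂ ∧
         c ≤ SB.mul b₁ b₂) ∧
     (∀ b : B, CJI b →
       sInf {a : A | SB.lneg (kappa b) ≤ h a} = SA.lneg (kappa (sInf {a : A | b ≤ h a}))) ∧
     (∀ b : B, CJI b →
       sInf {a : A | SB.rneg (kappa b) ≤ h a} = SA.rneg (kappa (sInf {a : A | b ≤ h a}))) ∧
     (∀ b : B, CJI b → (b ≤ SB.one ↔ sInf {a : A | b ≤ h a} ≤ SA.one))) ∧
    (Function.Injective h →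
      ∀ a : A, CJI a → ∃ b : B, CJI b ∧ sInf {x : A | b ≤ h x} = a) ∧
    (Function.Surjective h →
      ∀ b b' : B, CJI b → CJI b' →
        (b' ≤ b ↔ sInf {a : A | b' ≤ h a} ≤ sInf {a : A | b ≤ h a})) := by
  obtain ⟨hsup, hinf, hmul, hone, hlneg, hrneg⟩ := hh
  have hcji (b : B) (hb : CJI b) : CJI (dualMap h b) :=
    cji_dualMap hsup hinf hdistB hperfB.eq_sInf hb
  refine ⟨⟨hcji, ?_, ?_, ?_, ?_, ?_, ?_⟩, ?_, ?_⟩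
  · exact fun _ _ _ _ hle => (gc_dualMap hinf).monotone_l hle
  · exact fun _ _ _ _ _ _ hle => dualMap_le_mul hinf hmul hle
  · exact fun _ _ _ hc _ _ hle => exists_cji_dualMap_le_of_le_mul hinf hmul hdistB hperfB hc hle
  · exact fun b hb => dualMap_lneg_kappa hinf hrneg hdistA hperfA.eq_sInf hdistB
      hperfB.eq_sInf hb (hcji b hb)
  · exact fun b hb => dualMap_rneg_kappa hinf hlneg hdistA hperfA.eq_sInf hdistB
      hperfB.eq_sInf hb (hcji b hb)
  · exact fun _ _ => (dualMap_le_one_iff hinf hone).symm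
  · exact fun hinj _ ha => exists_cji_dualMap_eq hinf hperfB.eq_sSup hinj ha
  · exact fun hsurj _ _ _ _ => (dualMap_le_dualMap_iff hinf hsurj).symm
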